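/- Let f = Σ_{i=0}^d f_i X^{q^i} ∈ F[X] be a q-linearized polynomial with f₀ ≠ 0 and f_d ≠ 0 (so f is separable of degree q^d). For z ∈ ℝ set N_f(z) = #{β ∈ F̄ : f(β) = 0 and (β = 0 or ν(β) ≥ z)}. Then for every z ∈ ℝ which is not of the form ν(β) for a nonzero root β of f in F̄, the function V_f : ℝ → ℝ is differentiable at z with derivative V_f′(z) = N_f(z). -/

import Mathlib

open Polynomial

/-- A polynomial is `q`-linearized if it is of the form `Σ fᵢ X^(qⁱ)`. -/
def IsqLin {F : Type*} [Field F] (q : ℕ) (f : Polynomial F) : Prop :=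
  ∀ n, f.coeff n ≠ 0 → ∃ i : ℕ, n = q ^ i

/-- The valuation polygon `V_f(z) = min { ν(fᵢ) + qⁱ z : fᵢ ≠ 0 }` of a nonzero
`q`-linearized polynomial. -/
noncomputable def Vpoly {F : Type*} [Field F] (q : ℕ) (ν : F → ℚ) (f : Polynomial F)
    (z : ℝ) : ℝ :=
  sInf {y : ℝ | ∃ i : ℕ, f.coeff (q ^ i) ≠ 0 ∧
    y = (ν (f.coeff (q ^ i)) : ℝ) + (q : ℝ) ^ i * z}

/-!
Over `F̄` the image `g` of `f` splits, and its roots are distinct because `g' = f₁ ≠ 0`.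
By Vieta, `g_n = ± c · e_{N-n}(roots)`, `N = deg g`. Let `A` be the roots of valuation `< z` and
`M` the others, `m = #M`. For `z'` close to `z` the roots in `A` still have valuation `≤ z'` and
those in `M` valuation `> z'`; a product of `k` roots then has valuation
`≥ Σ_A ν + (k - #A) z'`, and `Π_A` is the only `#A`-fold product reaching this bound, so it
dominates `e_{#A}`. Hence `ν(g_n) + n z' ≥ ν(g_m) + m z'` for every `n`, and `V_f` is affine of
slope `m` near `z`. Finally `M` is an `𝔽_q`-subspace (the zeros of the `𝔽_q`-linear map `g`
inside a valuation ball), so `m` is a power of `q`, i.e. `g_m` is one of the coefficients defining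
`V_f`.
-/

theorem Multiset.sum_map_le_sum_map_add_card_sub_mul {α : Type*} {μ : α → ℝ} {z : ℝ}
    {s t : Multiset α} (hts : t ≤ s) (hμz : ∀ x ∈ s, μ x ≤ z) :
    (s.map μ).sum ≤ (t.map μ).sum + ((card s : ℝ) - card t) * z := by
  obtain ⟨u, rfl⟩ := Multiset.le_iff_exists_add.mp hts
  have hu : (u.map μ).sum ≤ card u * z := by
    simpa using Multiset.sum_le_card_nsmul (u.map μ) z (by
      simpa using fun x hx => hμz x (Multiset.mem_add.mpr (Or.inr hx)))
  simp only [Multiset.map_add, Multiset.sum_add, Multiset.card_add, Nat.cast_add]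
  linarith

theorem Multiset.sum_map_eq_sum_map_filter_add_card_mul {α : Type*} {P : α → Prop}
    [DecidablePred P] {μ : α → ℝ} {z : ℝ} {s : Multiset α} (hnP : ∀ x ∈ s, ¬ P x → μ x = z) :
    (s.map μ).sum = ((s.filter P).map μ).sum + card (s.filter (¬ P ·)) * z := by
  have hM : (s.filter (¬ P ·)).map μ = (s.filter (¬ P ·)).map fun _ => z :=
    Multiset.map_congr rfl fun x hx =>
      hnP x (Multiset.mem_of_mem_filter hx) (Multiset.of_mem_filter (p := (¬ P ·)) hx)
  conv_lhs => rw [← Multiset.filter_add_not P s]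
  simp [hM, Multiset.map_const', nsmul_eq_mul]

namespace AddValuation

section

variable {R Γ₀ : Type*} [CommRing R] [LinearOrderedAddCommMonoidWithTop Γ₀] (v : AddValuation R Γ₀)

theorem le_map_multiset_sum {g : Γ₀} {s : Multiset R} (h : ∀ x ∈ s, g ≤ v x) :
    g ≤ v s.sum := by
  induction s using Multiset.induction with
  | empty => simp
  | cons a s ih =>
    simp only [Multiset.mem_cons, forall_eq_or_imp] at h
    simpa using v.map_le_add h.1 (ih h.2)

theorem lt_map_multiset_sum {g : Γ₀} (hg : g ≠ ⊤) {s : Multiset R} (h : ∀ x ∈ s, g < v x) :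
    g < v s.sum := by
  induction s using Multiset.induction with
  | empty => simpa using hg.lt_top
  | cons a s ih =>
    simp only [Multiset.mem_cons, forall_eq_or_imp] at h
    simpa using v.map_lt_add h.1 (ih h.2)

end

section

variable {K : Type*} [Field K] (v : AddValuation K (WithTop ℝ))

theorem coe_sum_le_map_multiset_prod {μ : K → ℝ} {s : Multiset K}
    (h : ∀ x ∈ s, (μ x : WithTop ℝ) ≤ v x) : (((s.map μ).sum : ℝ) : WithTop ℝ) ≤ v s.prod := by
  induction s using Multiset.induction with
  | empty => simp
  | cons a s ih =>
    simp only [Multiset.mem_cons, forall_eq_or_imp] at h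
    simpa [v.map_mul] using add_le_add h.1 (ih h.2)

theorem coe_sum_lt_map_multiset_prod {μ : K → ℝ} {s : Multiset K}
    (h : ∀ x ∈ s, (μ x : WithTop ℝ) ≤ v x) {y : K} (hy : y ∈ s) (hlt : (μ y : WithTop ℝ) < v y) :
    (((s.map μ).sum : ℝ) : WithTop ℝ) < v s.prod := by
  classical
  rw [← Multiset.cons_erase hy, Multiset.map_cons, Multiset.sum_cons, Multiset.prod_cons,
    v.map_mul, WithTop.coe_add]
  exact WithTop.add_lt_add_of_lt_of_le (WithTop.coe_ne_top) hlt
    (v.coe_sum_le_map_multiset_prod fun x hx => h x (Multiset.mem_of_mem_erase hx))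

theorem map_multiset_prod_eq_coe_sum {μ : K → ℝ} {s : Multiset K}
    (h : ∀ x ∈ s, (μ x : WithTop ℝ) = v x) : v s.prod = (((s.map μ).sum : ℝ) : WithTop ℝ) := by
  induction s using Multiset.induction with
  | empty => simp
  | cons a s ih =>
    simp only [Multiset.mem_cons, forall_eq_or_imp] at h
    simp [v.map_mul, ← h.1, ih h.2]

theorem coe_sum_sub_le_map_esymm {μ : K → ℝ} {z : ℝ} {R : Multiset K}
    (hμv : ∀ x ∈ R, (μ x : WithTop ℝ) ≤ v x) (hμz : ∀ x ∈ R, μ x ≤ z) (j : ℕ) :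
    (((R.map μ).sum - ((Multiset.card R : ℝ) - j) * z : ℝ) : WithTop ℝ) ≤ v (R.esymm j) := by
  refine v.le_map_multiset_sum fun x hx => ?_
  obtain ⟨t, ht, rfl⟩ := Multiset.mem_map.mp hx
  obtain ⟨htR, rfl⟩ := Multiset.mem_powersetCard.mp ht
  refine le_trans ?_ (v.coe_sum_le_map_multiset_prod fun x hx => hμv x (Multiset.mem_of_le htR hx))
  have := Multiset.sum_map_le_sum_map_add_card_sub_mul htR hμz
  exact WithTop.coe_le_coe.mpr (by linarith)

theorem coe_sum_filter_lt_map_prod {P : K → Prop} [DecidablePred P] {μ : K → ℝ} {z : ℝ}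
    {R t : Multiset K} (hP : ∀ x ∈ R, P x → (μ x : WithTop ℝ) = v x ∧ μ x ≤ z)
    (hnP : ∀ x ∈ R, ¬ P x → μ x = z ∧ (z : WithTop ℝ) < v x) (htR : t ≤ R)
    (htcard : Multiset.card t = Multiset.card (R.filter P)) (htP : t ≠ R.filter P) :
    ((((R.filter P).map μ).sum : ℝ) : WithTop ℝ) < v t.prod := by
  have hμv : ∀ x ∈ R, (μ x : WithTop ℝ) ≤ v x := fun x hx => by
    by_cases h : P x
    · exact (hP x hx h).1.le
    · exact (hnP x hx h).1 ▸ (hnP x hx h).2.le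
  have hμz : ∀ x ∈ R, μ x ≤ z := fun x hx => by
    by_cases h : P x
    · exact (hP x hx h).2
    · exact (hnP x hx h).1.le
  obtain ⟨y, hyt, hy⟩ : ∃ y ∈ t, ¬ P y := by
    by_contra! h
    exact htP (Multiset.eq_of_le_of_card_le (Multiset.le_filter.mpr ⟨htR, h⟩) htcard.ge)
  have hyR := Multiset.mem_of_le htR hyt
  refine lt_of_le_of_lt ?_ (v.coe_sum_lt_map_multiset_prod
    (fun x hx => hμv x (Multiset.mem_of_le htR hx)) hyt ((hnP y hyR hy).1 ▸ (hnP y hyR hy).2))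
  have hcard : Multiset.card R = Multiset.card (R.filter P) + Multiset.card (R.filter (¬ P ·)) := by
    rw [← Multiset.card_add, Multiset.filter_add_not]
  have := Multiset.sum_map_le_sum_map_add_card_sub_mul htR hμz
  rw [hcard, htcard, Multiset.sum_map_eq_sum_map_filter_add_card_mul fun x hx h => (hnP x hx h).1]
    at this
  push_cast at this
  exact WithTop.coe_le_coe.mpr (by linarith)

theorem map_esymm_card_filter {P : K → Prop} [DecidablePred P] {μ : K → ℝ} {z : ℝ}
    {R : Multiset K} (hR : R.Nodup) (hP : ∀ x ∈ R, P x → (μ x : WithTop ℝ) = v x ∧ μ x ≤ z)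
    (hnP : ∀ x ∈ R, ¬ P x → μ x = z ∧ (z : WithTop ℝ) < v x) :
    v (R.esymm (Multiset.card (R.filter P))) = ((((R.filter P).map μ).sum : ℝ) : WithTop ℝ) := by
  classical
  set A := R.filter P
  have hA : v A.prod = ((A.map μ).sum : WithTop ℝ) :=
    v.map_multiset_prod_eq_coe_sum fun x hx =>
      (hP x (Multiset.mem_of_mem_filter hx) (Multiset.of_mem_filter hx)).1
  obtain ⟨S, hS⟩ : ∃ S, Multiset.powersetCard (Multiset.card A) R = A ::ₘ S :=
    ⟨_, (Multiset.cons_erase (Multiset.mem_powersetCard.mpr ⟨Multiset.filter_le P R, rfl⟩)).symm⟩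
  have hSA : A ∉ S := by
    have hnd := hR.powersetCard (n := Multiset.card A)
    rw [hS] at hnd
    exact (Multiset.nodup_cons.mp hnd).1
  have hrest : v A.prod < v (S.map Multiset.prod).sum := by
    refine hA ▸ v.lt_map_multiset_sum WithTop.coe_ne_top fun x hx => ?_
    obtain ⟨t, htS, rfl⟩ := Multiset.mem_map.mp hx
    obtain ⟨htR, htcard⟩ := Multiset.mem_powersetCard.mp (hS ▸ Multiset.mem_cons_of_mem htS)
    exact v.coe_sum_filter_lt_map_prod hP hnP htR htcard fun h => hSA (by rwa [h] at htS)
  rw [Multiset.esymm, hS, Multiset.map_cons, Multiset.sum_cons, v.map_add_eq_of_lt_left hrest, hA]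

theorem map_leadingCoeff_add_le_map_coeff_add {p : K[X]} (hp : p.Splits) {μ : K → ℝ} {z : ℝ}
    (hμv : ∀ x ∈ p.roots, (μ x : WithTop ℝ) ≤ v x) (hμz : ∀ x ∈ p.roots, μ x ≤ z) (n : ℕ) :
    v p.leadingCoeff + (((p.roots.map μ).sum : ℝ) : WithTop ℝ) ≤
      v (p.coeff n) + ((n * z : ℝ) : WithTop ℝ) := by
  rcases le_or_gt n p.natDegree with hn | hn
  · rw [coeff_eq_esymm_roots_of_splits hp hn, v.map_mul, v.map_mul, v.map_pow, v.map_neg,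
      v.map_one, smul_zero, add_zero, add_assoc]
    gcongr
    have h := v.coe_sum_sub_le_map_esymm hμv hμz (p.natDegree - n)
    rw [splits_iff_card_roots.mp hp, Nat.cast_sub hn] at h
    calc (((p.roots.map μ).sum : ℝ) : WithTop ℝ)
        = (((p.roots.map μ).sum - ((p.natDegree : ℝ) - (p.natDegree - n)) * z : ℝ) : WithTop ℝ)
          + ((n * z : ℝ) : WithTop ℝ) := by rw [← WithTop.coe_add]; ring_nf
      _ ≤ _ := by gcongr
  · rw [coeff_eq_zero_of_natDegree_lt hn, v.map_zero, top_add]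
    exact le_top

theorem map_coeff_card_filter_not_add {p : K[X]} (hp : p.Splits) (hR : p.roots.Nodup)
    {P : K → Prop} [DecidablePred P] {μ : K → ℝ} {z : ℝ}
    (hP : ∀ x ∈ p.roots, P x → (μ x : WithTop ℝ) = v x ∧ μ x ≤ z)
    (hnP : ∀ x ∈ p.roots, ¬ P x → μ x = z ∧ (z : WithTop ℝ) < v x) :
    v (p.coeff (Multiset.card (p.roots.filter (¬ P ·)))) +
        ((Multiset.card (p.roots.filter (¬ P ·)) * z : ℝ) : WithTop ℝ) =
      v p.leadingCoeff + (((p.roots.map μ).sum : ℝ) : WithTop ℝ) := by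
  have hcard : p.natDegree = Multiset.card (p.roots.filter P) +
      Multiset.card (p.roots.filter (¬ P ·)) := by
    rw [← Multiset.card_add, Multiset.filter_add_not, splits_iff_card_roots.mp hp]
  rw [coeff_eq_esymm_roots_of_splits hp (by omega), show p.natDegree -
      Multiset.card (p.roots.filter (¬ P ·)) = Multiset.card (p.roots.filter P) by omega,
    v.map_mul, v.map_mul, v.map_pow, v.map_neg, v.map_one, smul_zero, add_zero,
    v.map_esymm_card_filter hR hP hnP, add_assoc, ← WithTop.coe_add,
    Multiset.sum_map_eq_sum_map_filter_add_card_mul fun x hx h => (hnP x hx h).1]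

theorem map_coeff_card_filter_not_add_le {p : K[X]} (hp : p.Splits) (hR : p.roots.Nodup)
    {P : K → Prop} [DecidablePred P] {z : ℝ}
    (hP : ∀ x ∈ p.roots, P x → v x ≤ z) (hnP : ∀ x ∈ p.roots, ¬ P x → (z : WithTop ℝ) < v x)
    (n : ℕ) :
    v (p.coeff (Multiset.card (p.roots.filter (¬ P ·)))) +
        ((Multiset.card (p.roots.filter (¬ P ·)) * z : ℝ) : WithTop ℝ) ≤
      v (p.coeff n) + ((n * z : ℝ) : WithTop ℝ) := by
  set μ : K → ℝ := fun x => if P x then (v x).untopD 0 else z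
  have hPμ : ∀ x ∈ p.roots, P x → (μ x : WithTop ℝ) = v x ∧ μ x ≤ z := by
    intro x hx h
    have hle := hP x hx h
    obtain ⟨r, hr⟩ := WithTop.ne_top_iff_exists.mp (ne_top_of_le_ne_top WithTop.coe_ne_top hle)
    rw [← hr] at hle
    simpa [μ, h, ← hr] using hle
  have hnPμ : ∀ x ∈ p.roots, ¬ P x → μ x = z ∧ (z : WithTop ℝ) < v x :=
    fun x hx h => ⟨if_neg h, hnP x hx h⟩
  rw [v.map_coeff_card_filter_not_add hp hR hPμ hnPμ]
  refine v.map_leadingCoeff_add_le_map_coeff_add hp (fun x hx => ?_) (fun x hx => ?_) n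
  · by_cases h : P x
    · exact (hPμ x hx h).1.le
    · exact (hnPμ x hx h).1 ▸ (hnP x hx h).le
  · by_cases h : P x
    · exact (hPμ x hx h).2
    · exact (hnPμ x hx h).1.le

open Topology in
theorem eventually_map_coeff_card_add_le {p : K[X]} (hp : p.Splits) (hR : p.roots.Nodup)
    {z : ℝ} (hz : ∀ x ∈ p.roots, v x ≠ z) :
    ∀ᶠ z' in 𝓝 z, ∀ n, v (p.coeff (Multiset.card (p.roots.filter ((z : WithTop ℝ) ≤ v ·)))) +
        ((Multiset.card (p.roots.filter ((z : WithTop ℝ) ≤ v ·)) * z' : ℝ) : WithTop ℝ) ≤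
      v (p.coeff n) + ((n * z' : ℝ) : WithTop ℝ) := by
  have hnear : ∀ᶠ z' : ℝ in 𝓝 z, ∀ x ∈ {x | x ∈ p.roots},
      (v x < z → v x ≤ z') ∧ (¬ v x < z → (z' : WithTop ℝ) < v x) := by
    refine (Filter.eventually_all_finite p.roots.finite_toSet).mpr fun x hx => ?_
    rcases eq_or_ne (v x) ⊤ with htop | hfin
    · simp [htop]
    obtain ⟨r, hr⟩ := WithTop.ne_top_iff_exists.mp hfin
    have hrz : r ≠ z := fun h => hz x hx (by rw [← hr, h])
    rw [← hr]
    simp only [WithTop.coe_lt_coe, WithTop.coe_le_coe]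
    rcases hrz.lt_or_gt with hlt | hgt
    · filter_upwards [eventually_gt_nhds hlt] with z' hz'
      exact ⟨fun _ => hz'.le, fun h => absurd hlt h⟩
    · filter_upwards [eventually_lt_nhds hgt] with z' hz'
      exact ⟨fun h => absurd h hgt.not_gt, fun _ => hz'⟩
  filter_upwards [hnear] with z' hz' n
  have hfilter : p.roots.filter ((z : WithTop ℝ) ≤ v ·) = p.roots.filter (¬ v · < z) :=
    Multiset.filter_congr fun x _ => not_lt.symm
  rw [hfilter]
  exact v.map_coeff_card_filter_not_add_le hp hR (P := (v · < z))
    (fun x hx h => (hz' x hx).1 h) (fun x hx h => (hz' x hx).2 h) n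

end

section

variable {K : Type*} [Field K]

open scoped Classical in
/-- The hypotheses on `ν` only constrain it on nonzero elements; its value at `0` is replaced
by `⊤`. -/
noncomputable def ofRatFun (ν : K → ℚ)
    (hmul : ∀ x y : K, x ≠ 0 → y ≠ 0 → ν (x * y) = ν x + ν y)
    (hadd : ∀ x y : K, x ≠ 0 → y ≠ 0 → x + y ≠ 0 → min (ν x) (ν y) ≤ ν (x + y)) :
    AddValuation K (WithTop ℝ) :=
  AddValuation.of (fun x => if x = 0 then ⊤ else ((ν x : ℝ) : WithTop ℝ)) (if_pos rfl)
    (by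
      have h := hmul 1 1 one_ne_zero one_ne_zero
      rw [mul_one, left_eq_add] at h
      simp [h])
    (fun x y => by
      by_cases hx : x = 0
      · simp [hx]
      by_cases hy : y = 0
      · simp [hy]
      by_cases hxy : x + y = 0
      · simp [hxy]
      simp only [hx, hy, hxy, if_false]
      exact_mod_cast hadd x y hx hy hxy)
    (fun x y => by
      by_cases hx : x = 0
      · simp [hx]
      by_cases hy : y = 0
      · simp [hy]
      simp [hx, hy, hmul x y hx hy])

variable {ν : K → ℚ} {hmul : ∀ x y : K, x ≠ 0 → y ≠ 0 → ν (x * y) = ν x + ν y}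
  {hadd : ∀ x y : K, x ≠ 0 → y ≠ 0 → x + y ≠ 0 → min (ν x) (ν y) ≤ ν (x + y)}

theorem ofRatFun_of_ne_zero {x : K} (hx : x ≠ 0) :
    ofRatFun ν hmul hadd x = ((ν x : ℝ) : WithTop ℝ) := by
  simp [ofRatFun, hx]

theorem coe_le_ofRatFun_iff {z : ℝ} {x : K} :
    (z : WithTop ℝ) ≤ ofRatFun ν hmul hadd x ↔ x = 0 ∨ z ≤ ν x := by
  by_cases hx : x = 0
  · simp [ofRatFun, hx]
  · simp [ofRatFun_of_ne_zero hx, hx]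

theorem map_algebraMap_eq_zero {Fq : Type*} [Field Fq] [Fintype Fq] [Algebra Fq K]
    (v : AddValuation K (WithTop ℝ)) {c : Fq} (hc : c ≠ 0) : v (algebraMap Fq K c) = 0 := by
  have h : v (algebraMap Fq K c ^ (Fintype.card Fq - 1)) = v 1 := by
    rw [← _root_.map_pow, FiniteField.pow_card_sub_one_eq_one c hc, _root_.map_one]
  rw [v.map_pow, v.map_one] at h
  obtain ⟨r, hr⟩ := WithTop.ne_top_iff_exists.mp
    (v.ne_top_iff.mpr ((_root_.map_ne_zero (algebraMap Fq K)).mpr hc))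
  have hq : Fintype.card Fq - 1 ≠ 0 := by have := Fintype.one_lt_card (α := Fq); omega
  rw [← hr, ← WithTop.coe_nsmul, WithTop.coe_eq_zero, nsmul_eq_mul] at h
  rw [← hr, WithTop.coe_eq_zero]
  exact (mul_eq_zero.mp h).resolve_left (by exact_mod_cast hq)

def leSubmodule (Fq : Type*) [Field Fq] [Fintype Fq] [Algebra Fq K]
    (v : AddValuation K (WithTop ℝ)) (γ : WithTop ℝ) : Submodule Fq K where
  carrier := {x | γ ≤ v x}
  add_mem' := v.map_le_add
  zero_mem' := by simp
  smul_mem' c x hx := by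
    rcases eq_or_ne c 0 with rfl | hc
    · simp
    · simpa [Algebra.smul_def, v.map_mul, v.map_algebraMap_eq_zero hc] using hx

end

end AddValuation

theorem FiniteField.frobeniusAlgHom_pow_apply (Fq : Type*) {K : Type*} [Field Fq] [Fintype Fq]
    [CommRing K] [Algebra Fq K] (i : ℕ) (x : K) :
    (FiniteField.frobeniusAlgHom Fq K ^ i) x = x ^ Fintype.card Fq ^ i := by
  induction i with
  | zero => simp
  | succ i ih => rw [pow_succ', AlgHom.mul_apply, ih, FiniteField.frobeniusAlgHom_apply, ← pow_mul,
      ← pow_succ]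

namespace IsqLin

theorem map {F K : Type*} [Field F] [Field K] {q : ℕ} {f : F[X]} (hf : IsqLin q f) (φ : F →+* K) :
    IsqLin q (f.map φ) :=
  fun n hn => hf n fun h => hn (by rw [coeff_map, h, φ.map_zero])

variable {K : Type*} [Field K] {f : K[X]}

theorem derivative_eq {q : ℕ} (hf : IsqLin q f) (hq : (q : K) = 0) :
    derivative f = C (f.coeff 1) := by
  ext n
  rw [coeff_derivative, coeff_C]
  rcases eq_or_ne n 0 with rfl | hn
  · simp
  rw [if_neg hn]
  by_cases h : f.coeff (n + 1) = 0
  · rw [h, zero_mul]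
  obtain ⟨i, hi⟩ := hf (n + 1) h
  have hi0 : i ≠ 0 := by rintro rfl; simp at hi; omega
  have : ((n : K) + 1) = 0 := by exact_mod_cast (show ((n + 1 : ℕ) : K) = 0 by
    rw [hi, Nat.cast_pow, hq, zero_pow hi0])
  rw [this, mul_zero]

variable {Fq : Type*} [Field Fq] [Fintype Fq] [Algebra Fq K]

theorem eval_add (hf : IsqLin (Fintype.card Fq) f) (x y : K) :
    f.eval (x + y) = f.eval x + f.eval y := by
  simp only [eval_eq_sum, Polynomial.sum_def, ← Finset.sum_add_distrib]
  refine Finset.sum_congr rfl fun n hn => ?_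
  obtain ⟨i, rfl⟩ := hf n (mem_support_iff.mp hn)
  simp only [← FiniteField.frobeniusAlgHom_pow_apply, map_add, mul_add]

theorem eval_smul (hf : IsqLin (Fintype.card Fq) f) (c : Fq) (x : K) :
    f.eval (c • x) = c • f.eval x := by
  simp only [eval_eq_sum, Polynomial.sum_def, Finset.smul_sum]
  refine Finset.sum_congr rfl fun n hn => ?_
  obtain ⟨i, rfl⟩ := hf n (mem_support_iff.mp hn)
  simp only [← FiniteField.frobeniusAlgHom_pow_apply, map_smul, mul_smul_comm]

theorem separable (hf : IsqLin (Fintype.card Fq) f) (h1 : f.coeff 1 ≠ 0) : f.Separable := by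
  have hq : (Fintype.card Fq : K) = 0 := by
    rw [← map_natCast (algebraMap Fq K), FiniteField.cast_card_eq_zero, map_zero]
  rw [separable_def, hf.derivative_eq hq]
  exact ⟨0, C (f.coeff 1)⁻¹, by rw [zero_mul, zero_add, ← C_mul, inv_mul_cancel₀ h1, C_1]⟩

def evalLinearMap (hf : IsqLin (Fintype.card Fq) f) : K →ₗ[Fq] K where
  toFun x := f.eval x
  map_add' := hf.eval_add
  map_smul' := hf.eval_smul

theorem exists_natCard_eq_pow (hf : IsqLin (Fintype.card Fq) f) (hf0 : f ≠ 0)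
    (v : AddValuation K (WithTop ℝ)) (γ : WithTop ℝ) :
    ∃ i, Nat.card {x // f.eval x = 0 ∧ γ ≤ v x} = Fintype.card Fq ^ i := by
  let V := LinearMap.ker hf.evalLinearMap ⊓ v.leSubmodule Fq γ
  have hV : Nat.card {x // f.eval x = 0 ∧ γ ≤ v x} = Nat.card V := rfl
  have : Finite V := (f.roots.finite_toSet.subset fun x hx => (mem_roots hf0).mpr hx.1).to_subtype
  have : Module.Finite Fq V := Module.Finite.of_finite
  exact ⟨_, by rw [hV, Module.natCard_eq_pow_finrank (K := Fq), Nat.card_eq_fintype_card]⟩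

end IsqLin

theorem Polynomial.card_roots_filter_eq_natCard {K : Type*} [Field K] {p : K[X]} (hp : p ≠ 0)
    (hR : p.roots.Nodup) (Q : K → Prop) [DecidablePred Q] :
    Multiset.card (p.roots.filter Q) = Nat.card {x // p.eval x = 0 ∧ Q x} := by
  classical
  rw [← Multiset.toFinset_card_of_nodup (hR.filter Q), ← Nat.card_eq_finsetCard]
  exact Nat.card_congr (Equiv.subtypeEquivRight fun x => by simp [mem_roots hp])

theorem Vpoly_eq_of_forall_le {F K : Type*} [Field F] [Field K] (φ : F →+* K)
    (v : AddValuation K (WithTop ℝ)) {ν : K → ℚ} (hν : ∀ x, x ≠ 0 → v x = ((ν x : ℝ) : WithTop ℝ))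
    {f : F[X]} (hf : f ≠ 0) {q i : ℕ} {z : ℝ}
    (hle : ∀ n, v (φ (f.coeff (q ^ i))) + ((((q ^ i : ℕ) : ℝ) * z : ℝ) : WithTop ℝ) ≤
      v (φ (f.coeff n)) + ((n * z : ℝ) : WithTop ℝ)) :
    Vpoly q (fun t => ν (φ t)) f z = ν (φ (f.coeff (q ^ i))) + (q : ℝ) ^ i * z := by
  have hν' : ∀ a, a ≠ 0 → v (φ a) = ((ν (φ a) : ℝ) : WithTop ℝ) :=
    fun a ha => hν _ ((map_ne_zero φ).mpr ha)
  have hi : f.coeff (q ^ i) ≠ 0 := by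
    intro h
    have := hle f.natDegree
    rw [h, φ.map_zero, v.map_zero, top_add, top_le_iff, hν' _ (by simpa using hf),
      ← WithTop.coe_add] at this
    exact WithTop.coe_ne_top this
  unfold Vpoly
  refine IsLeast.csInf_eq ⟨⟨i, hi, rfl⟩, ?_⟩
  rintro _ ⟨j, hj, rfl⟩
  have := hle (q ^ j)
  rw [hν' _ hi, hν' _ hj, ← WithTop.coe_add, ← WithTop.coe_add, WithTop.coe_le_coe] at this
  push_cast at this
  exact this

theorem stmt9_general {Fq F : Type*} [Field Fq] [Fintype Fq] [Field F] [Algebra Fq F]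
    (q : ℕ) (hq : q = Fintype.card Fq)
    (ν : AlgebraicClosure F → ℚ)
    (hmul : ∀ x y : AlgebraicClosure F, x ≠ 0 → y ≠ 0 → ν (x * y) = ν x + ν y)
    (hadd : ∀ x y : AlgebraicClosure F, x ≠ 0 → y ≠ 0 → x + y ≠ 0 →
      min (ν x) (ν y) ≤ ν (x + y))
    (f : Polynomial F) (hf : IsqLin q f)
    (hf0 : f.coeff 1 ≠ 0)
    (z : ℝ)
    (hz : ∀ β : AlgebraicClosure F, Polynomial.aeval β f = 0 → β ≠ 0 → (ν β : ℝ) ≠ z) :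
    HasDerivAt (Vpoly q (fun t => ν (algebraMap F (AlgebraicClosure F) t)) f)
      (Nat.card {β : AlgebraicClosure F //
        Polynomial.aeval β f = 0 ∧ (β = 0 ∨ z ≤ (ν β : ℝ))} : ℝ) z := by
  subst hq
  set v := AddValuation.ofRatFun ν hmul hadd
  set g := f.map (algebraMap F (AlgebraicClosure F))
  have hfne : f ≠ 0 := fun h => hf0 (by simp [h])
  have hg0 : g ≠ 0 := Polynomial.map_ne_zero hfne
  have hR : g.roots.Nodup := nodup_roots (hf.separable hf0).map
  have hzR : ∀ x ∈ g.roots, v x ≠ z := fun x hx => by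
    rcases eq_or_ne x 0 with rfl | hx0
    · simp
    · rw [AddValuation.ofRatFun_of_ne_zero hx0, Ne, WithTop.coe_eq_coe]
      exact hz x (by simpa [aeval_def, eval_map, g, hg0] using hx) hx0
  have hcount : Nat.card {β // aeval β f = 0 ∧ (β = 0 ∨ z ≤ (ν β : ℝ))} =
      Nat.card {x // g.eval x = 0 ∧ (z : WithTop ℝ) ≤ v x} :=
    Nat.card_congr (Equiv.subtypeEquivRight fun x => by
      simp [aeval_def, eval_map, g, v, AddValuation.coe_le_ofRatFun_iff])
  obtain ⟨i, hi⟩ := (hf.map (algebraMap F (AlgebraicClosure F))).exists_natCard_eq_pow hg0 v z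
  rw [← card_roots_filter_eq_natCard hg0 hR] at hi
  have hV : ∀ᶠ z' in nhds z, Vpoly (Fintype.card Fq) (fun t => ν (algebraMap F _ t)) f z' =
      ν (algebraMap F _ (f.coeff (Fintype.card Fq ^ i))) +
        ((Fintype.card Fq ^ i : ℕ) : ℝ) * z' := by
    filter_upwards [v.eventually_map_coeff_card_add_le (IsAlgClosed.splits g) hR hzR] with z' hz'
    rw [hi] at hz'
    push_cast
    exact Vpoly_eq_of_forall_le _ v (fun x hx => AddValuation.ofRatFun_of_ne_zero hx) hfne
      (by simpa [g] using hz')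
  rw [hcount, ← card_roots_filter_eq_natCard hg0 hR, hi]
  simpa using (((hasDerivAt_id z).const_mul _).const_add _).congr_of_eventuallyEq hV

theorem stmt9 {Fq F : Type*} [Field Fq] [Fintype Fq] [Field F] [Algebra Fq F]
    (q : ℕ) (hq : q = Fintype.card Fq)
    (ν : AlgebraicClosure F → ℚ)
    (hmul : ∀ x y : AlgebraicClosure F, x ≠ 0 → y ≠ 0 → ν (x * y) = ν x + ν y)
    (hadd : ∀ x y : AlgebraicClosure F, x ≠ 0 → y ≠ 0 → x + y ≠ 0 →
      min (ν x) (ν y) ≤ ν (x + y))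
    (f : Polynomial F) (hf : IsqLin q f) (d : ℕ)
    (hf0 : f.coeff 1 ≠ 0) (hfd : f.coeff (q ^ d) ≠ 0) (hdeg : f.natDegree = q ^ d)
    (z : ℝ)
    (hz : ∀ β : AlgebraicClosure F, Polynomial.aeval β f = 0 → β ≠ 0 → (ν β : ℝ) ≠ z) :
    HasDerivAt (Vpoly q (fun t => ν (algebraMap F (AlgebraicClosure F) t)) f)
      (Nat.card {β : AlgebraicClosure F //
        Polynomial.aeval β f = 0 ∧ (β = 0 ∨ z ≤ (ν β : ℝ))} : ℝ) z :=
  stmt9_general q hq ν hmul hadd f hf hf0 z hz
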